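/- Let G be a finite connected weighted graph with lazy random walk transition matrix P = (I + D^{−1}A)/2 and stationary distribution π(x) = w(x)/vol(V). Then for every vertex x and every integer t ≥ 1, p_t(x,x) = ⟨P^t 1_x, 1_x⟩ satisfies p_t(x,x)/π(x) − 1 < 2·vol(V)·R_diam(x)/t, where R_diam(x) = max_y R_eff(x,y). -/

import Mathlib

/-!
Conjugating by `D^{1/2}` turns `P` into the symmetric positive semidefinite matrix
`M = D^{1/2} P D^{-1/2}`, whose eigenvalue `1` has the unit eigenvector `√π`. Removing it leaves
`Q = M - √π √πᵀ` with spectrum in `[0, 1)` (by connectivity), and for `t ≥ 1`,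
`p_t(x,x)/π(x) - 1 = Q^t(x,x)/π(x)`. Spectrally `t Q^t ≤ (1 - Q)⁻¹ - 1`, so it remains to bound the
Green's function `(1 - Q)⁻¹(x,x)`. It is the maximum of `2 v(x) - ⟨v, (1 - Q) v⟩`, and
`⟨v, (1 - Q) v⟩` is half the Dirichlet energy of `v/√d` plus the square of the stationary mean;
potential drops from `x` are at most `√(R_eff · energy)`, which gives
`(1 - Q)⁻¹(x,x) ≤ π(x) + 2 d(x) R_diam(x)`. Strictness comes from `π(x) < 1`.
-/

/-- Energy of `f` on the weighted graph with weight matrix `W` (sum over unordered pairs). -/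
noncomputable def energyW {n : ℕ} (W : Matrix (Fin n) (Fin n) ℝ) (f : Fin n → ℝ) : ℝ :=
  (∑ x, ∑ y, W x y * (f x - f y) ^ 2) / 2

/-- Effective conductance between `s` and `t`. -/
noncomputable def Ceff {n : ℕ} (W : Matrix (Fin n) (Fin n) ℝ) (s t : Fin n) : ℝ :=
  sInf {q | ∃ f : Fin n → ℝ, f s ≠ f t ∧ q = energyW W f / (f s - f t) ^ 2}

/-- Effective resistance between `s` and `t`. -/
noncomputable def Reff {n : ℕ} (W : Matrix (Fin n) (Fin n) ℝ) (s t : Fin n) : ℝ :=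
  (Ceff W s t)⁻¹

/-- Transition matrix `P = (I + D⁻¹A)/2` of the lazy random walk. -/
noncomputable def lazyP {n : ℕ} (W : Matrix (Fin n) (Fin n) ℝ) :
    Matrix (Fin n) (Fin n) ℝ :=
  Matrix.of fun x y => ((if x = y then (1 : ℝ) else 0) + W x y / (∑ z, W x z)) / 2

lemma mul_pow_le_inv_one_sub_sub_one {μ : ℝ} (h0 : 0 ≤ μ) (h1 : μ < 1) (t : ℕ) :
    t * μ ^ t ≤ (1 - μ)⁻¹ - 1 := by
  calc (t : ℝ) * μ ^ t = ∑ _i ∈ Finset.Ico 1 (t + 1), μ ^ t := by simp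
    _ ≤ ∑ i ∈ Finset.Ico 1 (t + 1), μ ^ i := Finset.sum_le_sum fun i hi =>
        pow_le_pow_of_le_one h0 h1.le (by simp at hi; omega)
    _ ≤ μ ^ 1 / (1 - μ) := geom_sum_Ico_le_of_lt_one h0 h1
    _ = (1 - μ)⁻¹ - 1 := by field_simp [sub_ne_zero.mpr h1.ne']; ring

lemma add_pow_succ_of_mul_eq_zero {R : Type*} [Semiring R] {a p : R} (hap : a * p = 0)
    (hpa : p * a = 0) (hp : IsIdempotentElem p) (t : ℕ) : (a + p) ^ (t + 1) = a ^ (t + 1) + p := by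
  induction t with
  | zero => simp
  | succ t ih =>
    rw [pow_succ, ih, add_mul, mul_add, mul_add, ← pow_succ, pow_succ a t, mul_assoc, hap,
      mul_zero, hpa, hp.eq, zero_add, add_zero]

namespace Matrix

open scoped MatrixOrder

variable {ι : Type*} [Fintype ι]

lemma isHermitian_vecMulVec_self (φ : ι → ℝ) : (vecMulVec φ φ).IsHermitian := by
  simpa only [star_trivial] using (posSemidef_vecMulVec_self_star φ).1

lemma PosSemidef.sub_vecMulVec_self {M : Matrix ι ι ℝ} (hM : M.PosSemidef) {φ : ι → ℝ}
    (hφ : M *ᵥ φ = φ) (hφ1 : φ ⬝ᵥ φ = 1) : (M - vecMulVec φ φ).PosSemidef := by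
  have hMT : Mᵀ = M := isHermitian_iff_isSymm.mp hM.1
  refine .of_dotProduct_mulVec_nonneg (hM.1.sub (isHermitian_vecMulVec_self φ)) fun v => ?_
  set c := φ ⬝ᵥ v
  have hφMv : φ ⬝ᵥ M *ᵥ v = c := by
    rw [dotProduct_mulVec, ← mulVec_transpose, hMT, hφ]
  have key : (v - c • φ) ⬝ᵥ M *ᵥ (v - c • φ) = v ⬝ᵥ (M - vecMulVec φ φ) *ᵥ v := by
    simp only [mulVec_sub, mulVec_smul, hφ, sub_dotProduct, dotProduct_sub, smul_dotProduct,
      dotProduct_smul, smul_eq_mul, sub_mulVec, vecMulVec_mulVec, hφMv, hφ1]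
    rw [dotProduct_comm v φ, MulOpposite.smul_eq_mul_unop, MulOpposite.unop_op]
    ring
  simpa [← key] using hM.dotProduct_mulVec_nonneg (v - c • φ)

variable [DecidableEq ι]

lemma spectrum_subset_Ico_of_posDef_one_sub {Q : Matrix ι ι ℝ} (hQ : Q.PosSemidef)
    (hQ1 : (1 - Q).PosDef) : spectrum ℝ Q ⊆ Set.Ico 0 1 := by
  intro μ hμ
  refine ⟨(posSemidef_iff_isHermitian_and_spectrum_nonneg.mp hQ).2 hμ, ?_⟩
  have h1 : 1 - μ ∈ spectrum ℝ (1 - Q) := by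
    rw [← map_one (algebraMap ℝ (Matrix ι ι ℝ)), ← spectrum.singleton_sub_eq]
    exact Set.sub_mem_sub rfl hμ
  linarith [(isStrictlyPositive_iff_posDef.mpr hQ1).spectrum_pos h1]

/-- Spectrally, `t μ^t ≤ μ + μ² + ⋯ = (1 - μ)⁻¹ - 1` on `[0, 1)`. -/
lemma PosSemidef.natCast_mul_pow_apply_self_le {Q : Matrix ι ι ℝ} (hQ : Q.PosSemidef)
    (hQ1 : (1 - Q).PosDef) (t : ℕ) (x : ι) : t * (Q ^ t) x x ≤ (1 - Q)⁻¹ x x - 1 := by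
  have hspec := spectrum_subset_Ico_of_posDef_one_sub hQ hQ1
  have hcont : ∀ f : ℝ → ℝ, ContinuousOn f (spectrum ℝ Q) := fun f =>
    Q.finite_real_spectrum.continuousOn f
  have hinv : (1 - Q)⁻¹ - 1 = cfc (fun μ : ℝ => (1 - μ)⁻¹ - 1) Q := by
    rw [cfc_sub _ _ Q (hcont _) (hcont _), cfc_const_one ℝ Q,
      cfc_inv (fun μ : ℝ => 1 - μ) Q (fun μ hμ => by linarith [(hspec hμ).2]) (hcont _),
      cfc_sub _ _ Q (hcont _) (hcont _), cfc_const_one ℝ Q, cfc_id' ℝ Q,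
      nonsing_inv_eq_ringInverse]
  have hpow : (t : ℝ) • Q ^ t = cfc (fun μ : ℝ => t * μ ^ t) Q := by
    rw [cfc_const_mul _ _ Q (hcont _), cfc_pow_id Q t]
  have hle : (t : ℝ) • Q ^ t ≤ (1 - Q)⁻¹ - 1 := by
    rw [hinv, hpow]
    exact cfc_mono (fun μ hμ => mul_pow_le_inv_one_sub_sub_one (hspec hμ).1 (hspec hμ).2 t)
      (hcont _) (hcont _)
  simpa [sub_nonneg] using (le_iff.mp hle).diag_nonneg (i := x)

lemma inv_apply_self_le_of_forall {B : Matrix ι ι ℝ} (hB : IsUnit B) {x : ι} {c : ℝ}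
    (h : ∀ v : ι → ℝ, 2 * v x - v ⬝ᵥ B *ᵥ v ≤ c) : B⁻¹ x x ≤ c := by
  set γ := B⁻¹ *ᵥ Pi.single x 1
  have hBγ : B *ᵥ γ = Pi.single x 1 := by
    rw [mulVec_mulVec, mul_nonsing_inv _ ((isUnit_iff_isUnit_det B).mp hB), one_mulVec]
  have hγx : γ x = B⁻¹ x x := by simp [γ, mulVec_single]
  -- `γ = B⁻¹ eₓ` attains the bound: `2 γ x - γ ⬝ᵥ B *ᵥ γ = γ x`.
  have := h γ
  rw [hBγ, dotProduct_single, mul_one, hγx] at this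
  linarith

end Matrix

open Matrix Finset

section

variable {n : ℕ} {W : Matrix (Fin n) (Fin n) ℝ}

noncomputable def degW (W : Matrix (Fin n) (Fin n) ℝ) (z : Fin n) : ℝ := ∑ y, W z y

noncomputable def volW (W : Matrix (Fin n) (Fin n) ℝ) : ℝ := ∑ z, degW W z

lemma degW_pos [Nontrivial (Fin n)] (hsym : ∀ x y, W x y = W y x) (hnn : ∀ x y, 0 ≤ W x y)
    (hconn : (SimpleGraph.fromRel fun x y => W x y ≠ 0).Connected) (z : Fin n) :
    0 < degW W z := by
  obtain ⟨u, hadj⟩ := hconn.preconnected.exists_adj_of_nontrivial z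
  have hzu : W z u ≠ 0 := by
    rcases ((SimpleGraph.fromRel_adj _ z u).mp hadj).2 with h | h
    · exact h
    · rwa [hsym]
  exact ((hnn z u).lt_of_ne' hzu).trans_le (single_le_sum (fun y _ => hnn z y) (mem_univ u))

lemma degW_lt_volW [Nontrivial (Fin n)] (hdeg : ∀ z, 0 < degW W z) (x : Fin n) :
    degW W x < volW W := by
  obtain ⟨y, hyx⟩ := exists_ne x
  exact single_lt_sum hyx (mem_univ x) (mem_univ y) (hdeg y) fun z _ _ => (hdeg z).le

lemma volW_pos [Nonempty (Fin n)] (hdeg : ∀ z, 0 < degW W z) : 0 < volW W :=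
  sum_pos (fun z _ => hdeg z) univ_nonempty

lemma energyW_nonneg (hnn : ∀ x y, 0 ≤ W x y) (f : Fin n → ℝ) : 0 ≤ energyW W f := by
  unfold energyW
  exact div_nonneg (sum_nonneg fun x _ => sum_nonneg fun y _ =>
    mul_nonneg (hnn x y) (sq_nonneg _)) zero_le_two

lemma mul_sq_sub_le_two_mul_energyW (hnn : ∀ x y, 0 ≤ W x y) (a b : Fin n) (f : Fin n → ℝ) :
    W a b * (f a - f b) ^ 2 ≤ 2 * energyW W f := by
  have hterm : ∀ x y, 0 ≤ W x y * (f x - f y) ^ 2 := fun x y => mul_nonneg (hnn x y) (sq_nonneg _)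
  calc W a b * (f a - f b) ^ 2 ≤ ∑ y, W a y * (f a - f y) ^ 2 :=
        single_le_sum (fun y _ => hterm a y) (mem_univ b)
    _ ≤ ∑ x, ∑ y, W x y * (f x - f y) ^ 2 :=
        single_le_sum (f := fun x => ∑ y, W x y * (f x - f y) ^ 2)
          (fun x _ => sum_nonneg fun y _ => hterm x y) (mem_univ a)
    _ = 2 * energyW W f := by rw [energyW]; ring

lemma exists_sq_sub_le_mul_energyW (hnn : ∀ x y, 0 ≤ W x y) {s t : Fin n}
    (p : (SimpleGraph.fromRel fun x y => W x y ≠ 0).Walk s t) :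
    ∃ c > 0, ∀ f : Fin n → ℝ, (f s - f t) ^ 2 ≤ c * energyW W f := by
  induction p with
  | nil => exact ⟨1, one_pos, fun f => by simpa using energyW_nonneg hnn f⟩
  | @cons s v t hadj _ ih =>
    obtain ⟨c, hc, hcf⟩ := ih
    obtain ⟨w, hw, hedge⟩ : ∃ w > 0, ∀ f : Fin n → ℝ, w * (f s - f v) ^ 2 ≤ 2 * energyW W f := by
      rcases (SimpleGraph.fromRel_adj _ s v).mp hadj |>.2 with h | h
      · exact ⟨W s v, (hnn s v).lt_of_ne' h, mul_sq_sub_le_two_mul_energyW hnn s v⟩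
      · refine ⟨W v s, (hnn v s).lt_of_ne' h, fun f => ?_⟩
        rw [← neg_sub, neg_sq]; exact mul_sq_sub_le_two_mul_energyW hnn v s f
    refine ⟨4 / w + 2 * c, by positivity, fun f => ?_⟩
    have h1 : (f s - f v) ^ 2 ≤ 2 * energyW W f / w := by
      rw [le_div_iff₀ hw, mul_comm]; exact hedge f
    calc (f s - f t) ^ 2 ≤ 2 * (f s - f v) ^ 2 + 2 * (f v - f t) ^ 2 := by
          nlinarith [sq_nonneg (f s + f t - 2 * f v)]
      _ ≤ 2 * (2 * energyW W f / w) + 2 * (c * energyW W f) := by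
          gcongr
          exact hcf f
      _ = (4 / w + 2 * c) * energyW W f := by ring

lemma Ceff_nonneg (hnn : ∀ x y, 0 ≤ W x y) (s t : Fin n) : 0 ≤ Ceff W s t :=
  Real.sInf_nonneg fun _ ⟨f, _, hq⟩ => hq ▸ div_nonneg (energyW_nonneg hnn f) (sq_nonneg _)

lemma Reff_nonneg (hnn : ∀ x y, 0 ≤ W x y) (s t : Fin n) : 0 ≤ Reff W s t :=
  inv_nonneg.mpr (Ceff_nonneg hnn s t)

lemma Ceff_le (hnn : ∀ x y, 0 ≤ W x y) {f : Fin n → ℝ} {s t : Fin n} (hf : f s ≠ f t) :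
    Ceff W s t ≤ energyW W f / (f s - f t) ^ 2 :=
  csInf_le ⟨0, fun _ ⟨g, _, hq⟩ => hq ▸ div_nonneg (energyW_nonneg hnn g) (sq_nonneg _)⟩
    ⟨f, hf, rfl⟩

lemma Ceff_pos (hnn : ∀ x y, 0 ≤ W x y)
    (hconn : (SimpleGraph.fromRel fun x y => W x y ≠ 0).Connected) {s t : Fin n} (hst : s ≠ t) :
    0 < Ceff W s t := by
  obtain ⟨c, hc, hcf⟩ := exists_sq_sub_le_mul_energyW hnn (hconn.preconnected s t).some
  have hne : {q | ∃ f : Fin n → ℝ, f s ≠ f t ∧ q = energyW W f / (f s - f t) ^ 2}.Nonempty :=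
    ⟨_, Pi.single s 1, by simp [hst], rfl⟩
  refine lt_of_lt_of_le (inv_pos.mpr hc) (le_csInf hne ?_)
  rintro q ⟨f, hf, rfl⟩
  have hd : 0 < (f s - f t) ^ 2 := by positivity [sub_ne_zero.mpr hf]
  rw [le_div_iff₀ hd, inv_mul_le_iff₀ hc]
  exact hcf f

lemma sq_sub_le_Reff_mul_energyW (hnn : ∀ x y, 0 ≤ W x y)
    (hconn : (SimpleGraph.fromRel fun x y => W x y ≠ 0).Connected) (f : Fin n → ℝ) (s t : Fin n) :
    (f s - f t) ^ 2 ≤ Reff W s t * energyW W f := by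
  rcases eq_or_ne (f s) (f t) with hf | hf
  · rw [hf, sub_self, zero_pow two_ne_zero]
    exact mul_nonneg (Reff_nonneg hnn s t) (energyW_nonneg hnn f)
  have hC : 0 < Ceff W s t := Ceff_pos hnn hconn fun h => hf (h ▸ rfl)
  have hle := Ceff_le hnn hf
  rw [le_div_iff₀ (by positivity [sub_ne_zero.mpr hf])] at hle
  rw [Reff, inv_mul_eq_div, le_div_iff₀ hC, mul_comm]
  exact hle

noncomputable def Rdiam (W : Matrix (Fin n) (Fin n) ℝ) (x : Fin n) : ℝ :=
  sSup {r | ∃ y : Fin n, r = Reff W x y}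

lemma Reff_le_Rdiam (x y : Fin n) : Reff W x y ≤ Rdiam W x := by
  refine le_csSup ?_ ⟨y, rfl⟩
  refine ((Set.finite_range fun y => Reff W x y).subset ?_).bddAbove
  rintro _ ⟨y, rfl⟩
  exact ⟨y, rfl⟩

lemma apply_eq_of_energyW_eq_zero (hnn : ∀ x y, 0 ≤ W x y)
    (hconn : (SimpleGraph.fromRel fun x y => W x y ≠ 0).Connected) {f : Fin n → ℝ}
    (hf : energyW W f = 0) (s t : Fin n) : f s = f t := by
  have h := sq_sub_le_Reff_mul_energyW hnn hconn f s t
  rw [hf, mul_zero] at h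
  exact sub_eq_zero.mp (pow_eq_zero_iff two_ne_zero |>.mp (le_antisymm h (sq_nonneg _)))

lemma sum_sum_mul_eq_sum_degW_mul (hsym : ∀ x y, W x y = W y x) (g : Fin n → ℝ) :
    ∑ z, ∑ y, W z y * g y = ∑ y, degW W y * g y := by
  rw [sum_comm]
  exact sum_congr rfl fun y _ => by rw [degW, sum_mul]; exact sum_congr rfl fun z _ => by rw [hsym]

lemma energyW_eq_sum_sub_sum (hsym : ∀ x y, W x y = W y x) (f : Fin n → ℝ) :
    energyW W f = ∑ z, degW W z * f z ^ 2 - ∑ z, ∑ y, W z y * f z * f y := by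
  have hrow : ∀ z, ∑ y, W z y * (f z - f y) ^ 2
      = degW W z * f z ^ 2 - 2 * ∑ y, W z y * f z * f y + ∑ y, W z y * f y ^ 2 := by
    intro z
    rw [degW, sum_mul, mul_sum, ← sum_sub_distrib, ← sum_add_distrib]
    exact sum_congr rfl fun y _ => by ring
  rw [energyW, sum_congr rfl fun z _ => hrow z, sum_add_distrib, sum_sub_distrib,
    sum_sum_mul_eq_sum_degW_mul hsym, ← mul_sum]
  ring

lemma energyW_le_two_mul_sum (hsym : ∀ x y, W x y = W y x) (hnn : ∀ x y, 0 ≤ W x y)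
    (f : Fin n → ℝ) : energyW W f ≤ 2 * ∑ z, degW W z * f z ^ 2 := by
  have hpair : ∀ z y, W z y * (f z - f y) ^ 2 ≤ W z y * (2 * f z ^ 2) + W z y * (2 * f y ^ 2) :=
    fun z y => by nlinarith [hnn z y, mul_nonneg (hnn z y) (sq_nonneg (f z + f y))]
  calc energyW W f ≤ (∑ z, ∑ y, (W z y * (2 * f z ^ 2) + W z y * (2 * f y ^ 2))) / 2 := by
        rw [energyW]; gcongr with z _ y _; exact hpair z y
    _ = (∑ z, degW W z * (2 * f z ^ 2) + ∑ y, degW W y * (2 * f y ^ 2)) / 2 := by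
        simp only [sum_add_distrib, sum_sum_mul_eq_sum_degW_mul hsym, degW, sum_mul]
    _ = 2 * ∑ z, degW W z * f z ^ 2 := by
        simp only [mul_left_comm _ (2 : ℝ), ← mul_sum]
        ring

/-- The symmetrized lazy walk `D^{1/2} P D^{-1/2}`. -/
noncomputable def lazySym (W : Matrix (Fin n) (Fin n) ℝ) : Matrix (Fin n) (Fin n) ℝ :=
  Matrix.of fun z y => ((if z = y then (1 : ℝ) else 0) + W z y / (√(degW W z) * √(degW W y))) / 2

noncomputable def sqrtStationary (W : Matrix (Fin n) (Fin n) ℝ) : Fin n → ℝ :=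
  fun z => √(degW W z) / √(volW W)

lemma dotProduct_one_sub_lazySym_mulVec (hsym : ∀ x y, W x y = W y x)
    (hdeg : ∀ z, 0 < degW W z) (v : Fin n → ℝ) :
    v ⬝ᵥ (1 - lazySym W) *ᵥ v = energyW W (fun z => v z / √(degW W z)) / 2 := by
  set a : Fin n → ℝ := fun z => v z / √(degW W z)
  have hrow : ∀ z, v z * (lazySym W *ᵥ v) z = (v z * v z + ∑ y, W z y * a z * a y) / 2 := by
    intro z
    simp only [mulVec, dotProduct, lazySym, of_apply, mul_sum]
    rw [sum_congr rfl fun y _ => (by split_ifs <;> ring :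
        v z * (((if z = y then 1 else 0) + W z y / (√(degW W z) * √(degW W y))) / 2 * v y)
          = ((if z = y then v z * v y else 0) + W z y * a z * a y) / 2),
      ← sum_div, sum_add_distrib, sum_ite_eq, if_pos (mem_univ _)]
  have hsq : ∀ z, v z * v z = degW W z * a z ^ 2 := fun z => by
    simp only [a, div_pow, Real.sq_sqrt (hdeg z).le]; field_simp [(hdeg z).ne']
  simp only [energyW_eq_sum_sub_sum hsym, sub_mulVec, one_mulVec, dotProduct_sub]
  simp only [dotProduct, hrow, ← sum_sub_distrib, sum_div]
  exact sum_congr rfl fun z _ => by rw [hsq]; ring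

lemma lazySym_isHermitian (hsym : ∀ x y, W x y = W y x) : (lazySym W).IsHermitian := by
  refine isHermitian_iff_isSymm.mpr (IsSymm.ext fun z y => ?_)
  simp only [lazySym, of_apply, hsym y z, mul_comm (√(degW W y)), eq_comm (a := y)]

noncomputable def lazySymCentered (W : Matrix (Fin n) (Fin n) ℝ) : Matrix (Fin n) (Fin n) ℝ :=
  lazySym W - vecMulVec (sqrtStationary W) (sqrtStationary W)

lemma lazySymCentered_isHermitian (hsym : ∀ x y, W x y = W y x) :
    (lazySymCentered W).IsHermitian :=
  (lazySym_isHermitian hsym).sub (isHermitian_vecMulVec_self _)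

lemma lazySym_posSemidef (hsym : ∀ x y, W x y = W y x) (hnn : ∀ x y, 0 ≤ W x y)
    (hdeg : ∀ z, 0 < degW W z) : (lazySym W).PosSemidef := by
  refine .of_dotProduct_mulVec_nonneg (lazySym_isHermitian hsym) fun v => ?_
  have h := dotProduct_one_sub_lazySym_mulVec hsym hdeg v
  have hle := energyW_le_two_mul_sum hsym hnn (fun z => v z / √(degW W z))
  have hvv : v ⬝ᵥ v = ∑ z, degW W z * (v z / √(degW W z)) ^ 2 := sum_congr rfl fun z _ => by
    rw [div_pow, Real.sq_sqrt (hdeg z).le]; field_simp [(hdeg z).ne']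
  rw [sub_mulVec, one_mulVec, dotProduct_sub] at h
  simp only [star_trivial]
  linarith

lemma lazySym_mulVec_sqrtStationary (hdeg : ∀ z, 0 < degW W z) :
    lazySym W *ᵥ sqrtStationary W = sqrtStationary W := by
  ext z
  have hz := Real.sqrt_pos.mpr (hdeg z)
  have hrow : ∀ y, lazySym W z y * sqrtStationary W y
      = ((if z = y then sqrtStationary W z else 0) + W z y / (√(degW W z) * √(volW W))) / 2 := by
    intro y
    have hy := Real.sqrt_pos.mpr (hdeg y)
    by_cases hzy : z = y
    · subst hzy; simp only [lazySym, sqrtStationary, of_apply, if_true]; field_simp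
    · simp only [lazySym, sqrtStationary, of_apply, hzy, if_false]; field_simp; ring
  have hdz : ∑ y, W z y = √(degW W z) * √(degW W z) := (Real.mul_self_sqrt (hdeg z).le).symm
  simp only [mulVec, dotProduct]
  rw [sum_congr rfl fun y _ => hrow y, ← sum_div, sum_add_distrib, sum_ite_eq, if_pos (mem_univ _),
    ← sum_div, hdz, sqrtStationary]
  field_simp
  ring

lemma sqrtStationary_dotProduct_self (hdeg : ∀ z, 0 < degW W z) (hvol : 0 < volW W) :
    sqrtStationary W ⬝ᵥ sqrtStationary W = 1 := by
  simp only [dotProduct, sqrtStationary, div_mul_div_comm, Real.mul_self_sqrt (hdeg _).le,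
    Real.mul_self_sqrt hvol.le, ← sum_div]
  exact div_self hvol.ne'

lemma lazySymCentered_posSemidef (hsym : ∀ x y, W x y = W y x) (hnn : ∀ x y, 0 ≤ W x y)
    (hdeg : ∀ z, 0 < degW W z) (hvol : 0 < volW W) : (lazySymCentered W).PosSemidef :=
  (lazySym_posSemidef hsym hnn hdeg).sub_vecMulVec_self (lazySym_mulVec_sqrtStationary hdeg)
    (sqrtStationary_dotProduct_self hdeg hvol)

lemma lazySymCentered_mulVec_sqrtStationary (hdeg : ∀ z, 0 < degW W z) (hvol : 0 < volW W) :
    lazySymCentered W *ᵥ sqrtStationary W = 0 := by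
  rw [lazySymCentered, sub_mulVec, lazySym_mulVec_sqrtStationary hdeg, vecMulVec_mulVec,
    sqrtStationary_dotProduct_self hdeg hvol, MulOpposite.op_one, one_smul, sub_self]

lemma sqrtStationary_dotProduct (hdeg : ∀ z, 0 < degW W z) (v : Fin n → ℝ) :
    sqrtStationary W ⬝ᵥ v = (∑ z, degW W z * (v z / √(degW W z))) / √(volW W) := by
  rw [dotProduct, sum_div]
  refine sum_congr rfl fun z _ => ?_
  have hz := Real.sqrt_pos.mpr (hdeg z)
  have hdz : degW W z * (v z / √(degW W z)) = √(degW W z) * v z := by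
    rw [mul_div_assoc', div_eq_iff hz.ne', mul_right_comm, Real.mul_self_sqrt (hdeg z).le]
  rw [sqrtStationary, hdz, div_mul_eq_mul_div]

lemma dotProduct_one_sub_lazySymCentered_mulVec (hsym : ∀ x y, W x y = W y x)
    (hdeg : ∀ z, 0 < degW W z) (v : Fin n → ℝ) :
    v ⬝ᵥ (1 - lazySymCentered W) *ᵥ v
      = energyW W (fun z => v z / √(degW W z)) / 2 + (sqrtStationary W ⬝ᵥ v) ^ 2 := by
  rw [lazySymCentered, ← sub_add, add_mulVec, dotProduct_add,
    dotProduct_one_sub_lazySym_mulVec hsym hdeg, vecMulVec_mulVec, dotProduct_smul,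
    MulOpposite.smul_eq_mul_unop, MulOpposite.unop_op, dotProduct_comm v, sq]

lemma one_sub_lazySymCentered_posDef (hsym : ∀ x y, W x y = W y x) (hnn : ∀ x y, 0 ≤ W x y)
    (hconn : (SimpleGraph.fromRel fun x y => W x y ≠ 0).Connected) (hdeg : ∀ z, 0 < degW W z)
    (hvol : 0 < volW W) : (1 - lazySymCentered W).PosDef := by
  refine .of_dotProduct_mulVec_pos
    (isHermitian_one.sub (lazySymCentered_isHermitian hsym)) fun v hv => ?_
  set a : Fin n → ℝ := fun z => v z / √(degW W z)
  rw [star_trivial, dotProduct_one_sub_lazySymCentered_mulVec hsym hdeg]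
  have hE := energyW_nonneg hnn a
  by_contra! hle
  have hE0 : energyW W a = 0 := by nlinarith [sq_nonneg (sqrtStationary W ⬝ᵥ v)]
  have hc0 : sqrtStationary W ⬝ᵥ v = 0 := by nlinarith [sq_nonneg (sqrtStationary W ⬝ᵥ v)]
  obtain ⟨z₀⟩ := hconn.nonempty
  have hconst : ∀ z, a z = a z₀ := (apply_eq_of_energyW_eq_zero hnn hconn hE0 · z₀)
  have ha0 : a z₀ = 0 := by
    have hsum : ∑ z, degW W z * a z = a z₀ * volW W := by
      simp only [hconst, volW, sum_mul, mul_comm]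
    rw [sqrtStationary_dotProduct hdeg] at hc0
    change (∑ z, degW W z * a z) / √(volW W) = 0 at hc0
    rw [hsum, div_eq_zero_iff, mul_eq_zero] at hc0
    rcases hc0 with (h | h) | h
    · exact h
    · exact absurd h hvol.ne'
    · exact absurd h (Real.sqrt_pos.mpr hvol).ne'
  refine hv (funext fun z => ?_)
  have := hconst z
  rw [ha0, div_eq_zero_iff] at this
  exact this.resolve_right (Real.sqrt_pos.mpr (hdeg z)).ne'

/-- Splitting `a x` at a minimum point `z₀` of `a`, the drop `a x - a z₀` is charged to the
energy through the effective resistance, and `a z₀` to the stationary mean of `a`. -/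
lemma two_mul_sub_dotProduct_one_sub_lazySymCentered_le (hsym : ∀ x y, W x y = W y x)
    (hnn : ∀ x y, 0 ≤ W x y) (hconn : (SimpleGraph.fromRel fun x y => W x y ≠ 0).Connected)
    (hdeg : ∀ z, 0 < degW W z) (hvol : 0 < volW W) (x : Fin n) (v : Fin n → ℝ) :
    2 * v x - v ⬝ᵥ (1 - lazySymCentered W) *ᵥ v
      ≤ degW W x / volW W + 2 * degW W x * Rdiam W x := by
  set a : Fin n → ℝ := fun z => v z / √(degW W z)
  set E := energyW W a
  set R := Rdiam W x
  set S := ∑ z, degW W z * a z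
  set s := √(degW W x)
  rw [dotProduct_one_sub_lazySymCentered_mulVec hsym hdeg, sqrtStationary_dotProduct hdeg, div_pow,
    Real.sq_sqrt hvol.le]
  obtain ⟨z₀, -, hz₀⟩ := exists_min_image univ a ⟨x, mem_univ x⟩
  have hs : 0 ≤ s := Real.sqrt_nonneg _
  have hss : s * s = degW W x := Real.mul_self_sqrt (hdeg x).le
  have hvx : v x = s * a x := (mul_div_cancel₀ (v x) (Real.sqrt_pos.mpr (hdeg x)).ne').symm
  have hE : 0 ≤ E := energyW_nonneg hnn a
  have hR : 0 ≤ R := (Reff_nonneg hnn x x).trans (Reff_le_Rdiam x x)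
  have hmean : a z₀ * volW W ≤ S := by
    rw [volW, mul_sum]
    exact sum_le_sum fun z _ => by nlinarith [hz₀ z (mem_univ z), hdeg z]
  have hdrop : (a x - a z₀) ^ 2 ≤ R * E := (sq_sub_le_Reff_mul_energyW hnn hconn a x z₀).trans
    (mul_le_mul_of_nonneg_right (Reff_le_Rdiam x z₀) hE)
  have hdrop_nonneg : 0 ≤ a x - a z₀ := sub_nonneg.mpr (hz₀ x (mem_univ x))
  -- AM-GM: `2 s (a x - a z₀) ≤ E / 2 + 2 s² R` since `(2 s (a x - a z₀))² ≤ 4 s² R E`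
  have hdrop_bound : 2 * s * (a x - a z₀) ≤ E / 2 + 2 * (s * s) * R := by
    have hsq : (2 * s * (a x - a z₀)) ^ 2 ≤ (E / 2 + 2 * (s * s) * R) ^ 2 := by
      nlinarith [sq_nonneg (E / 2 - 2 * (s * s) * R),
        mul_le_mul_of_nonneg_left hdrop (mul_nonneg hs hs)]
    exact (pow_le_pow_iff_left₀ (by positivity) (by positivity) two_ne_zero).mp hsq
  have hmean_bound : 2 * s * a z₀ - S ^ 2 / volW W ≤ s * s / volW W := by
    rw [← sub_nonneg]
    have : s * s / volW W - (2 * s * a z₀ - S ^ 2 / volW W)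
        = ((S - s) ^ 2 + 2 * s * (S - a z₀ * volW W)) / volW W := by field_simp; ring
    rw [this]
    have := mul_nonneg hs (sub_nonneg.mpr hmean)
    positivity
  rw [hvx, ← hss]
  linarith

lemma inv_one_sub_lazySymCentered_apply_self_le (hsym : ∀ x y, W x y = W y x)
    (hnn : ∀ x y, 0 ≤ W x y) (hconn : (SimpleGraph.fromRel fun x y => W x y ≠ 0).Connected)
    (hdeg : ∀ z, 0 < degW W z) (hvol : 0 < volW W) (x : Fin n) :
    (1 - lazySymCentered W)⁻¹ x x
      ≤ degW W x / volW W + 2 * degW W x * Rdiam W x :=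
  inv_apply_self_le_of_forall (one_sub_lazySymCentered_posDef hsym hnn hconn hdeg hvol).isUnit
    (two_mul_sub_dotProduct_one_sub_lazySymCentered_le hsym hnn hconn hdeg hvol x)

lemma lazySym_pow_succ (hsym : ∀ x y, W x y = W y x) (hdeg : ∀ z, 0 < degW W z)
    (hvol : 0 < volW W) (t : ℕ) :
    lazySym W ^ (t + 1)
      = lazySymCentered W ^ (t + 1) + vecMulVec (sqrtStationary W) (sqrtStationary W) := by
  have hQφ := lazySymCentered_mulVec_sqrtStationary hdeg hvol
  have hQT : (lazySymCentered W)ᵀ = lazySymCentered W :=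
    isHermitian_iff_isSymm.mp (lazySymCentered_isHermitian hsym)
  rw [← add_pow_succ_of_mul_eq_zero (p := vecMulVec (sqrtStationary W) (sqrtStationary W)),
    lazySymCentered, sub_add_cancel]
  · rw [mul_vecMulVec, hQφ, zero_vecMulVec]
  · rw [vecMulVec_mul, ← mulVec_transpose, hQT, hQφ, vecMulVec_zero]
  · rw [IsIdempotentElem, vecMulVec_mul_vecMulVec, sqrtStationary_dotProduct_self hdeg hvol,
      one_smul]

lemma lazyP_pow_apply_self (hdeg : ∀ z, 0 < degW W z) (t : ℕ) (x : Fin n) :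
    (lazyP W ^ t) x x = (lazySym W ^ t) x x := by
  have hsemi : SemiconjBy (diagonal fun z => √(degW W z)) (lazyP W) (lazySym W) := by
    ext z y
    have hz := Real.sqrt_pos.mpr (hdeg z)
    have hy := Real.sqrt_pos.mpr (hdeg y)
    have hdz : ∑ w, W z w = √(degW W z) * √(degW W z) := (Real.mul_self_sqrt (hdeg z).le).symm
    simp only [diagonal_mul, mul_diagonal, lazyP, lazySym, of_apply, hdz]
    split_ifs with hzy
    · subst hzy; field_simp
    · field_simp; ring
  have h := congrFun (congrFun (hsemi.pow_right t).eq x) x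
  simp only [diagonal_mul, mul_diagonal] at h
  exact mul_left_cancel₀ (Real.sqrt_pos.mpr (hdeg x)).ne' (h.trans (mul_comm _ _))

lemma lazyP_pow_succ_apply_self (hsym : ∀ x y, W x y = W y x) (hdeg : ∀ z, 0 < degW W z)
    (hvol : 0 < volW W) (t : ℕ) (x : Fin n) :
    (lazyP W ^ (t + 1)) x x = (lazySymCentered W ^ (t + 1)) x x + degW W x / volW W := by
  rw [lazyP_pow_apply_self hdeg, lazySym_pow_succ hsym hdeg hvol, Matrix.add_apply,
    vecMulVec_apply, sqrtStationary, div_mul_div_comm, Real.mul_self_sqrt (hdeg x).le,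
    Real.mul_self_sqrt hvol.le]

lemma natCast_mul_lazySymCentered_pow_apply_self_lt [Nontrivial (Fin n)]
    (hsym : ∀ x y, W x y = W y x) (hnn : ∀ x y, 0 ≤ W x y)
    (hconn : (SimpleGraph.fromRel fun x y => W x y ≠ 0).Connected) (t : ℕ) (x : Fin n) :
    t * (lazySymCentered W ^ t) x x < 2 * degW W x * Rdiam W x := by
  have hdeg := degW_pos hsym hnn hconn
  have hvol := volW_pos hdeg
  have hspec := (lazySymCentered_posSemidef hsym hnn hdeg hvol).natCast_mul_pow_apply_self_le
    (one_sub_lazySymCentered_posDef hsym hnn hconn hdeg hvol) t x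
  have hgreen := inv_one_sub_lazySymCentered_apply_self_le hsym hnn hconn hdeg hvol x
  have hπ : degW W x / volW W < 1 := (div_lt_one hvol).mpr (degW_lt_volW hdeg x)
  linarith

end

/-- For the lazy random walk on a finite connected weighted graph, for every `x` and `t ≥ 1`,
`p_t(x,x)/π(x) - 1 < 2·vol(V)·R_diam(x)/t`. -/
theorem stmt6 {n : ℕ} (W : Matrix (Fin n) (Fin n) ℝ)
    (hsym : ∀ x y, W x y = W y x) (hnn : ∀ x y, 0 ≤ W x y) (hloop : ∀ x, W x x = 0)
    (hconn : (SimpleGraph.fromRel fun x y => W x y ≠ 0).Connected)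
    (x : Fin n) (t : ℕ) (ht : 1 ≤ t) :
    (lazyP W ^ t) x x / ((∑ z, W x z) / (∑ u, ∑ z, W u z)) - 1 <
      2 * (∑ u, ∑ z, W u z) * sSup {r | ∃ y : Fin n, r = Reff W x y} / t := by
  rcases subsingleton_or_nontrivial (Fin n) with hsub | hnontriv
  · -- a single vertex: degree and volume vanish, and the left side is the junk value `0 / 0 - 1`
    have hdeg : ∑ z, W x z = 0 := by rw [Fintype.sum_subsingleton _ x, hloop]
    have hvol : ∑ u, ∑ z, W u z = 0 := by rw [Fintype.sum_subsingleton _ x, hdeg]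
    rw [hdeg, hvol]
    norm_num
  have hdeg := degW_pos hsym hnn hconn
  have hvol := volW_pos hdeg
  have hπ : 0 < degW W x / volW W := div_pos (hdeg x) hvol
  obtain ⟨s, rfl⟩ := Nat.exists_eq_add_of_le' ht
  change (lazyP W ^ (s + 1)) x x / (degW W x / volW W) - 1 < 2 * volW W * Rdiam W x / (s + 1 : ℕ)
  rw [lazyP_pow_succ_apply_self hsym hdeg hvol, add_div, div_self hπ.ne', add_sub_cancel_right,
    div_lt_div_iff₀ hπ (by positivity)]
  calc (lazySymCentered W ^ (s + 1)) x x * (s + 1 : ℕ)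
      < 2 * degW W x * Rdiam W x := by
        rw [mul_comm]; exact natCast_mul_lazySymCentered_pow_apply_self_lt hsym hnn hconn _ x
    _ = 2 * volW W * Rdiam W x * (degW W x / volW W) := by field_simp
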